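/- arXiv:2201.12411 — 2 statements merged into one kernel-verified Lean document; each statement's English description precedes it below -/
import Mathlib

section
/- Let x, y, ε be real numbers with 0 < x < y < 2π, ε > 0, y − x − 2ε > 0 and y − x + 2ε < 2π. Let f : ℝ -> ℝ be differentiable with f(−ε) = 0, f(ε) = 2π, and f'(t) > 2 for all t ∈ [−ε, ε]. Then there exists a unique t₀ ∈ [−ε, ε] satisfying f(t₀) = y − x + 2t₀, and this t₀ lies in the open interval (−ε, ε). Moreover, setting θ₀ = x − t₀, the point (θ₀, t₀) is a fixed point of the map F : ℝ × [−ε, ε] -> ℝ², F(θ, t) = (x − t, θ + f(t) − y), it is the unique fixed point of F, and the Jacobian matrix of F at (θ₀, t₀), namely the 2×2 real matrix with rows (0, −1) and (1, f'(t₀)), has two distinct real eigenvalues, both positive. -/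
/-!
The fixed points of `F` are the points `(x - t, t)` with `f t = y - x + 2 t`. Since `f' > 2`,
the function `g t = f t - (y - x + 2 t)` is strictly increasing on `[-ε, ε]`, and
`g (-ε) = -(y - x - 2ε) < 0 < 2π - (y - x + 2ε) = g ε`, so `g` has exactly one zero there, and it
is interior. The Jacobian has trace `f' t₀ > 2` and determinant `1`, so its characteristic
polynomial `X² - f' t₀ X + 1` has positive discriminant, and its two real roots are positive
because their sum and product are.
-/

open Polynomial Set

/-- The map `ψ ∘ τ_L` in the local coordinates `(θ, t)` near the intersection point `x`. -/
def twistMap (x y : ℝ) (f : ℝ → ℝ) (p : ℝ × ℝ) : ℝ × ℝ :=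
  (x - p.2, p.1 + f p.2 - y)

theorem isFixedPt_twistMap_iff (x y : ℝ) (f : ℝ → ℝ) (p : ℝ × ℝ) :
    Function.IsFixedPt (twistMap x y f) p ↔ p.1 = x - p.2 ∧ f p.2 = y - x + 2 * p.2 := by
  simp only [Function.IsFixedPt, twistMap, Prod.ext_iff]
  constructor <;> rintro ⟨hθ, ht⟩ <;> exact ⟨hθ.symm, by linarith⟩

theorem strictMonoOn_sub_affine_of_lt_deriv {D : Set ℝ} (hD : Convex ℝ D) {f : ℝ → ℝ}
    (hf : ContinuousOn f D) (hf' : DifferentiableOn ℝ f (interior D)) {c k : ℝ}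
    (hk : ∀ t ∈ interior D, k < deriv f t) :
    StrictMonoOn (fun t => f t - (c + k * t)) D := by
  intro s hs t ht hst
  have := hD.mul_sub_lt_image_sub_of_lt_deriv hf hf' hk s hs t ht hst
  linarith

theorem StrictMonoOn.exists_mem_Ioo_eq_zero {g : ℝ → ℝ} {a b : ℝ}
    (hmono : StrictMonoOn g (Icc a b)) (hab : a ≤ b) (hg : ContinuousOn g (Icc a b))
    (ha : g a < 0) (hb : 0 < g b) :
    ∃ t ∈ Ioo a b, g t = 0 ∧ ∀ s ∈ Icc a b, g s = 0 → s = t := by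
  obtain ⟨t, ht, hzero⟩ := intermediate_value_Ioo hab hg ⟨ha, hb⟩
  exact ⟨t, ht, hzero, fun s hs hs0 =>
    hmono.injOn hs (Ioo_subset_Icc_self ht) (hs0.trans hzero.symm)⟩

theorem exists_X_sq_sub_C_mul_X_add_C_eq_mul {s p : ℝ} (hs : 0 < s) (hp : 0 < p)
    (hdisc : 4 * p < s ^ 2) :
    ∃ μ₁ μ₂ : ℝ, μ₁ ≠ μ₂ ∧ 0 < μ₁ ∧ 0 < μ₂ ∧
      X ^ 2 - C s * X + C p = (X - C μ₁) * (X - C μ₂) := by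
  set r := √(s ^ 2 - 4 * p)
  have hr : 0 < r := Real.sqrt_pos.2 (by linarith)
  have hr_sq : r ^ 2 = s ^ 2 - 4 * p := Real.sq_sqrt (by linarith)
  have hrs : r < s := by nlinarith
  have hsum : C s = C ((s - r) / 2) + C ((s + r) / 2) := by rw [← map_add]; congr 1; ring
  have hprod : C p = C ((s - r) / 2) * C ((s + r) / 2) := by
    rw [← map_mul]; congr 1; linear_combination hr_sq / 4
  refine ⟨(s - r) / 2, (s + r) / 2, by intro h; linarith, by linarith, by linarith, ?_⟩
  rw [hsum, hprod]
  ring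

theorem positive_hyperbolic_fixed_point_general
    (x y ε : ℝ)
    (hε : 0 < ε) (h1 : y - x - 2 * ε > 0) (h2 : y - x + 2 * ε < 2 * Real.pi)
    (f : ℝ → ℝ) (hf : Differentiable ℝ f)
    (hfneg : f (-ε) = 0) (hfpos : f ε = 2 * Real.pi)
    (hf' : ∀ t ∈ Set.Icc (-ε) ε, deriv f t > 2)
    (F : ℝ × ℝ → ℝ × ℝ) (hF : ∀ p : ℝ × ℝ, F p = (x - p.2, p.1 + f p.2 - y)) :
    ∃ t₀ ∈ Set.Icc (-ε) ε,
      f t₀ = y - x + 2 * t₀ ∧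
      (∀ t ∈ Set.Icc (-ε) ε, f t = y - x + 2 * t → t = t₀) ∧
      t₀ ∈ Set.Ioo (-ε) ε ∧
      F (x - t₀, t₀) = (x - t₀, t₀) ∧
      (∀ p : ℝ × ℝ, p.2 ∈ Set.Icc (-ε) ε → F p = p → p = (x - t₀, t₀)) ∧
      (∃ μ₁ μ₂ : ℝ, μ₁ ≠ μ₂ ∧ 0 < μ₁ ∧ 0 < μ₂ ∧
        Matrix.charpoly !![(0 : ℝ), -1; 1, deriv f t₀] = (X - C μ₁) * (X - C μ₂)) := by
  obtain rfl : F = twistMap x y f := funext hF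
  have hmono : StrictMonoOn (fun t => f t - (y - x + 2 * t)) (Icc (-ε) ε) :=
    strictMonoOn_sub_affine_of_lt_deriv (convex_Icc _ _) hf.continuous.continuousOn
      hf.differentiableOn fun t ht => hf' t (interior_subset ht)
  obtain ⟨t₀, ht₀, hzero, hzero_unique⟩ := hmono.exists_mem_Ioo_eq_zero (by linarith)
    (hf.continuous.continuousOn.sub (by fun_prop)) (by simp only [hfneg]; linarith) (by simp only [hfpos]; linarith)
  have hroot : f t₀ = y - x + 2 * t₀ := sub_eq_zero.1 hzero
  have hroot_unique : ∀ t ∈ Icc (-ε) ε, f t = y - x + 2 * t → t = t₀ :=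
    fun t ht h => hzero_unique t ht (sub_eq_zero.2 h)
  refine ⟨t₀, Ioo_subset_Icc_self ht₀, hroot, hroot_unique, ht₀,
    (isFixedPt_twistMap_iff x y f _).2 ⟨rfl, hroot⟩, ?_, ?_⟩
  · intro p hp hfix
    obtain ⟨hθ, ht⟩ := (isFixedPt_twistMap_iff x y f p).1 hfix
    have hp₂ : p.2 = t₀ := hroot_unique p.2 hp ht
    exact Prod.ext (hθ.trans (by rw [hp₂])) hp₂
  · have hd : 2 < deriv f t₀ := hf' t₀ (Ioo_subset_Icc_self ht₀)
    rw [Matrix.charpoly_fin_two]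
    simpa [Matrix.trace_fin_two, Matrix.det_fin_two] using
      exists_X_sq_sub_C_mul_X_add_C_eq_mul (by linarith) one_pos (by nlinarith)

/-- Creation of a positive hyperbolic fixed point: with
`F (θ, t) = (x − t, θ + f t − y)`, there is a unique `t₀ ∈ [−ε, ε]` with
`f t₀ = y − x + 2 t₀`; it lies in `(−ε, ε)`, the point `(x − t₀, t₀)` is the unique
fixed point of `F` on `ℝ × [−ε, ε]`, and the Jacobian `!![0, −1; 1, f' t₀]` has two
distinct real eigenvalues, both positive. -/
theorem positive_hyperbolic_fixed_point
    (x y ε : ℝ) (hx : 0 < x) (hxy : x < y) (hy : y < 2 * Real.pi)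
    (hε : 0 < ε) (h1 : y - x - 2 * ε > 0) (h2 : y - x + 2 * ε < 2 * Real.pi)
    (f : ℝ → ℝ) (hf : Differentiable ℝ f)
    (hfneg : f (-ε) = 0) (hfpos : f ε = 2 * Real.pi)
    (hf' : ∀ t ∈ Set.Icc (-ε) ε, deriv f t > 2)
    (F : ℝ × ℝ → ℝ × ℝ) (hF : ∀ p : ℝ × ℝ, F p = (x - p.2, p.1 + f p.2 - y)) :
    ∃ t₀ ∈ Set.Icc (-ε) ε,
      f t₀ = y - x + 2 * t₀ ∧
      (∀ t ∈ Set.Icc (-ε) ε, f t = y - x + 2 * t → t = t₀) ∧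
      t₀ ∈ Set.Ioo (-ε) ε ∧
      F (x - t₀, t₀) = (x - t₀, t₀) ∧
      (∀ p : ℝ × ℝ, p.2 ∈ Set.Icc (-ε) ε → F p = p → p = (x - t₀, t₀)) ∧
      (∃ μ₁ μ₂ : ℝ, μ₁ ≠ μ₂ ∧ 0 < μ₁ ∧ 0 < μ₂ ∧
        Matrix.charpoly !![(0 : ℝ), -1; 1, deriv f t₀] = (X - C μ₁) * (X - C μ₂)) :=
  positive_hyperbolic_fixed_point_general x y ε hε h1 h2 f hf hfneg hfpos hf' F hF
end

section
/- Let x, y, ε be real numbers with 0 < x < y < 2π, ε > 0, y − x − 2ε > 0 and y − x + 2ε < 2π. Let f : ℝ -> ℝ be differentiable with f(−ε) = 0, f(ε) = 2π, and f'(t) > 2 for all t ∈ [−ε, ε]. Then there exists a unique t₀ ∈ [−ε, ε] satisfying f(t₀) = y − x − 2t₀, and this t₀ lies in the open interval (−ε, ε). Moreover, setting θ₀ = x + t₀, the point (θ₀, t₀) is a fixed point of the map F : ℝ × [−ε, ε] -> ℝ², F(θ, t) = (x + t, y − θ − f(t)), it is the unique fixed point of F, and the Jacobian matrix of F at (θ₀,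 t₀), namely the 2×2 real matrix with rows (0, 1) and (−1, −f'(t₀)), has two distinct real eigenvalues, both negative. -/
open Polynomial

/-- Creation of a negative hyperbolic fixed point: with
`F (θ, t) = (x + t, y − θ − f t)`, there is a unique `t₀ ∈ [−ε, ε]` with
`f t₀ = y − x − 2 t₀`; it lies in `(−ε, ε)`, the point `(x + t₀, t₀)` is the unique
fixed point of `F` on `ℝ × [−ε, ε]`, and the Jacobian `!![0, 1; −1, −f' t₀]` has two
distinct real eigenvalues, both negative. -/
theorem negative_hyperbolic_fixed_point
    (x y ε : ℝ) (hx : 0 < x) (hxy : x < y) (hy : y < 2 * Real.pi)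
    (hε : 0 < ε) (h1 : y - x - 2 * ε > 0) (h2 : y - x + 2 * ε < 2 * Real.pi)
    (f : ℝ → ℝ) (hf : Differentiable ℝ f)
    (hfneg : f (-ε) = 0) (hfpos : f ε = 2 * Real.pi)
    (hf' : ∀ t ∈ Set.Icc (-ε) ε, deriv f t > 2)
    (F : ℝ × ℝ → ℝ × ℝ) (hF : ∀ p : ℝ × ℝ, F p = (x + p.2, y - p.1 - f p.2)) :
    ∃ t₀ ∈ Set.Icc (-ε) ε,
      f t₀ = y - x - 2 * t₀ ∧
      (∀ t ∈ Set.Icc (-ε) ε, f t = y - x - 2 * t → t = t₀) ∧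
      t₀ ∈ Set.Ioo (-ε) ε ∧
      F (x + t₀, t₀) = (x + t₀, t₀) ∧
      (∀ p : ℝ × ℝ, p.2 ∈ Set.Icc (-ε) ε → F p = p → p = (x + t₀, t₀)) ∧
      (∃ μ₁ μ₂ : ℝ, μ₁ ≠ μ₂ ∧ μ₁ < 0 ∧ μ₂ < 0 ∧
        Matrix.charpoly !![(0 : ℝ), 1; -1, -deriv f t₀] = (X - C μ₁) * (X - C μ₂)) := by
  have hle : (-ε : ℝ) ≤ ε := by linarith
  set g : ℝ → ℝ := fun t => f t + 2 * t - (y - x) with hgdef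
  have hgderiv : ∀ t, deriv g t = deriv f t + 2 := by
    intro t
    have h : HasDerivAt g (deriv f t + 2 * 1) t :=
      (((hf t).hasDerivAt).add ((hasDerivAt_id t).const_mul 2)).sub_const (y - x)
    simpa using h.deriv
  have hgdiff : Differentiable ℝ g := by
    intro t
    exact ((((hf t).hasDerivAt).add ((hasDerivAt_id t).const_mul 2)).sub_const
      (y - x)).differentiableAt
  have hmono : StrictMonoOn g (Set.Icc (-ε) ε) := by
    apply strictMonoOn_of_deriv_pos (convex_Icc _ _) hgdiff.continuous.continuousOn
    intro t ht
    rw [interior_Icc] at ht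
    have := hf' t ⟨ht.1.le, ht.2.le⟩
    rw [hgderiv]; linarith
  have hga : g (-ε) < 0 := by simp only [hgdef]; rw [hfneg]; linarith
  have hgb : 0 < g ε := by simp only [hgdef]; rw [hfpos]; linarith
  obtain ⟨t₀, ht₀mem, ht₀⟩ :=
    intermediate_value_Icc hle hgdiff.continuous.continuousOn
      (Set.mem_Icc.mpr ⟨hga.le, hgb.le⟩)
  have ht₀' : f t₀ + 2 * t₀ - (y - x) = 0 := ht₀
  have heq : f t₀ = y - x - 2 * t₀ := by linarith
  have huniq : ∀ t ∈ Set.Icc (-ε) ε, f t = y - x - 2 * t → t = t₀ := by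
    intro t ht hft
    apply hmono.injOn ht ht₀mem
    show f t + 2 * t - (y - x) = f t₀ + 2 * t₀ - (y - x)
    linarith
  have hIoo : t₀ ∈ Set.Ioo (-ε) ε := by
    constructor
    · rcases ht₀mem.1.lt_or_eq with h | h
      · exact h
      · exfalso; rw [← h] at ht₀; linarith
    · rcases ht₀mem.2.lt_or_eq with h | h
      · exact h
      · exfalso; rw [h] at ht₀; linarith
  refine ⟨t₀, ht₀mem, heq, huniq, hIoo, ?_, ?_, ?_⟩
  · rw [hF]
    have h2 : y - (x + t₀) - f t₀ = t₀ := by rw [heq]; ring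
    simp [h2]
  · rintro ⟨p1, p2⟩ hp hFp
    rw [hF, Prod.mk.injEq] at hFp
    obtain ⟨h1', h2'⟩ := hFp
    simp only at h1' h2' hp ⊢
    have hfp : f p2 = y - x - 2 * p2 := by rw [← h1'] at h2'; linarith
    have hp2 := huniq p2 hp hfp
    rw [Prod.mk.injEq]
    exact ⟨by rw [← h1', hp2], hp2⟩
  · set a := deriv f t₀ with hadef
    have ha : 2 < a := hf' t₀ ht₀mem
    set d := Real.sqrt (a ^ 2 - 4) with hddef
    have hd2 : d ^ 2 = a ^ 2 - 4 := Real.sq_sqrt (by nlinarith)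
    have hdpos : 0 < d := Real.sqrt_pos.mpr (by nlinarith)
    have hdlt : d < a := by nlinarith
    refine ⟨(-a - d) / 2, (-a + d) / 2, by intro h; nlinarith [sub_eq_zero.mpr h],
      by linarith, by linarith, ?_⟩
    have hsum : (-a - d) / 2 + (-a + d) / 2 = -a := by ring
    have hprod : ((-a - d) / 2) * ((-a + d) / 2) = 1 := by nlinarith
    have hcp : Matrix.charpoly !![(0 : ℝ), 1; -1, -a] = X ^ 2 + C a * X + C 1 := by
      rw [Matrix.charpoly, Matrix.det_fin_two]
      simp [Matrix.charmatrix_apply_eq, Matrix.charmatrix_apply_ne]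
      ring
    rw [hcp, show a = -((-a - d) / 2 + (-a + d) / 2) by rw [hsum]; ring,
      show (1 : ℝ) = ((-a - d) / 2) * ((-a + d) / 2) from hprod.symm,
      map_mul, map_neg, map_add]
    ring
end
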